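/- Let μ ∈ ℝ, σ > 0, β ≥ 0, let u(x) = ( (x−μ)/σ² , ((x−μ)² − σ²)/σ³ ), and set ξ = ∫_ℝ u(x)·φ_{μ,σ}(x)^(1+β) dx. Then the 2×2 matrix K_β = ∫_ℝ u(x)·u(x)ᵀ·φ_{μ,σ}(x)^(1+2β) dx − ξ·ξᵀ equals ( σ^(2+2β) (2π)^β )^(−1) times [ (1+2β)^(−3/2)·diag( 1 , (4β²+2)/(1+2β) ) − diag( 0 , β²/(1+β)³ ) ]. -/

import Mathlib

open MeasureTheory

/-- The normal density with mean `μ` and standard deviation `σ`. -/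
noncomputable def normalPdf (μ σ x : ℝ) : ℝ :=
  (2 * Real.pi * σ ^ 2) ^ (-(1 / 2) : ℝ) * Real.exp (-(x - μ) ^ 2 / (2 * σ ^ 2))

/-- The normal score vector `u(x) = ( (x−μ)/σ² , ((x−μ)² − σ²)/σ³ )`. -/
noncomputable def normalScore (μ σ x : ℝ) : Fin 2 → ℝ :=
  ![(x - μ) / σ ^ 2, ((x - μ) ^ 2 - σ ^ 2) / σ ^ 3]

/-!
The power `φ^c` of the normal density is, up to the factor `∫ φ^c = (2πσ²)^((1-c)/2) / √c`, a
normal density of variance `σ²/c`. The entries of `u`, `u uᵀ` are polynomials in `x - μ`: the odd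
ones integrate to zero against `φ^c` by symmetry, and the even moments follow from the
integration-by-parts recursion `∫ (x-μ)^(n+2) φ^c = (n+1) σ²/c ∫ (x-μ)^n φ^c`. Hence `K_β` is
expressed through `∫ φ^(1+β)` and `∫ φ^(1+2β)` alone.
-/

open Real

lemma integral_eq_zero_of_odd {G E : Type*} [MeasurableSpace G] [AddGroup G] [MeasurableNeg G]
    [NormedAddCommGroup E] [NormedSpace ℝ E] {μ : Measure G} [μ.IsNegInvariant] {f : G → E}
    (hf : Function.Odd f) : ∫ x, f x ∂μ = 0 := by
  have h : ∫ x, f x ∂μ = -∫ x, f x ∂μ := by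
    calc ∫ x, f x ∂μ = ∫ x, f (-x) ∂μ := (integral_neg_eq_self f μ).symm
      _ = ∫ x, -f x ∂μ := integral_congr_ae (ae_of_all _ hf)
      _ = -∫ x, f x ∂μ := integral_neg _
  rw [← sub_eq_zero, sub_neg_eq_add, ← two_smul ℝ] at h
  exact (smul_eq_zero.mp h).resolve_left two_ne_zero

lemma hasDerivAt_pow_succ_mul_exp_neg_mul_sq (b : ℝ) (n : ℕ) (x : ℝ) :
    HasDerivAt (fun x : ℝ => x ^ (n + 1) * exp (-b * x ^ 2))
      ((n + 1) * (x ^ n * exp (-b * x ^ 2)) - 2 * b * (x ^ (n + 2) * exp (-b * x ^ 2))) x := by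
  refine ((hasDerivAt_pow (n + 1) x).mul ((hasDerivAt_pow 2 x).const_mul (-b)).exp).congr_deriv ?_
  simp only [Nat.add_sub_cancel, Nat.cast_add, Nat.cast_one, Nat.cast_ofNat]
  ring

section GaussianMoments

variable {b : ℝ}

lemma integrable_pow_mul_exp_neg_mul_sq (hb : 0 < b) (n : ℕ) :
    Integrable fun x : ℝ => x ^ n * exp (-b * x ^ 2) := by
  simpa [rpow_natCast] using
    integrable_rpow_mul_exp_neg_mul_sq hb (s := n) (neg_one_lt_zero.trans_le n.cast_nonneg)

lemma integral_pow_add_two_mul_exp_neg_mul_sq (hb : 0 < b) (n : ℕ) :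
    ∫ x : ℝ, x ^ (n + 2) * exp (-b * x ^ 2) =
      (n + 1) / (2 * b) * ∫ x : ℝ, x ^ n * exp (-b * x ^ 2) := by
  have hn := (integrable_pow_mul_exp_neg_mul_sq hb n).const_mul (n + 1 : ℝ)
  have hn2 := (integrable_pow_mul_exp_neg_mul_sq hb (n + 2)).const_mul (2 * b)
  have h := integral_eq_zero_of_hasDerivAt_of_integrable
    (hasDerivAt_pow_succ_mul_exp_neg_mul_sq b n) (hn.sub hn2)
    (integrable_pow_mul_exp_neg_mul_sq hb (n + 1))
  rw [integral_sub hn hn2, integral_const_mul, integral_const_mul] at h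
  rw [div_mul_eq_mul_div, eq_div_iff (by positivity)]
  linarith

end GaussianMoments

lemma normalPdf_rpow (μ σ c x : ℝ) :
    normalPdf μ σ x ^ c = (2 * π * σ ^ 2) ^ (-c / 2) * exp (-(c / (2 * σ ^ 2)) * (x - μ) ^ 2) := by
  have h : (0 : ℝ) ≤ 2 * π * σ ^ 2 := by positivity
  rw [normalPdf, mul_rpow (rpow_nonneg h _) (exp_pos _).le, ← rpow_mul h, ← exp_mul]
  ring_nf

section NormalMoments

variable {μ σ c : ℝ}

lemma integrable_sub_pow_mul_normalPdf_rpow (hσ : σ ≠ 0) (hc : 0 < c) (n : ℕ) :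
    Integrable fun x => (x - μ) ^ n * normalPdf μ σ x ^ c := by
  have h := ((integrable_pow_mul_exp_neg_mul_sq (b := c / (2 * σ ^ 2)) (by positivity) n).const_mul
    ((2 * π * σ ^ 2) ^ (-c / 2))).comp_sub_right μ
  refine h.congr (ae_of_all _ fun x => ?_)
  simp only [normalPdf_rpow]
  ring

lemma integral_sub_pow_mul_normalPdf_rpow (n : ℕ) :
    ∫ x, (x - μ) ^ n * normalPdf μ σ x ^ c =
      (2 * π * σ ^ 2) ^ (-c / 2) * ∫ x, x ^ n * exp (-(c / (2 * σ ^ 2)) * x ^ 2) := by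
  rw [← integral_const_mul, ← integral_sub_right_eq_self
    (fun x => (2 * π * σ ^ 2) ^ (-c / 2) * (x ^ n * exp (-(c / (2 * σ ^ 2)) * x ^ 2))) μ]
  congr 1 with x
  rw [normalPdf_rpow]
  ring

lemma integral_normalPdf_rpow (hσ : σ ≠ 0) (hc : 0 < c) :
    ∫ x, normalPdf μ σ x ^ c = (2 * π * σ ^ 2) ^ ((1 - c) / 2) / √c := by
  have h := integral_sub_pow_mul_normalPdf_rpow (μ := μ) (σ := σ) (c := c) 0
  simp only [pow_zero, one_mul] at h
  have hpos : (0 : ℝ) < 2 * π * σ ^ 2 := by positivity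
  rw [h, integral_gaussian, show π / (c / (2 * σ ^ 2)) = 2 * π * σ ^ 2 / c by field_simp,
    sqrt_div' _ hc.le, sqrt_eq_rpow, ← mul_div_assoc, ← rpow_add hpos]
  ring_nf

lemma integral_sub_pow_add_two_mul_normalPdf_rpow (hσ : σ ≠ 0) (hc : 0 < c) (n : ℕ) :
    ∫ x, (x - μ) ^ (n + 2) * normalPdf μ σ x ^ c =
      (n + 1) * σ ^ 2 / c * ∫ x, (x - μ) ^ n * normalPdf μ σ x ^ c := by
  rw [integral_sub_pow_mul_normalPdf_rpow, integral_sub_pow_mul_normalPdf_rpow,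
    integral_pow_add_two_mul_exp_neg_mul_sq (by positivity)]
  field_simp

lemma integral_odd_comp_sub_mul_normalPdf_rpow {g : ℝ → ℝ} (hg : Function.Odd g) :
    ∫ x, g (x - μ) * normalPdf μ σ x ^ c = 0 := by
  simp_rw [normalPdf_rpow]
  rw [integral_sub_right_eq_self
    (fun t => g t * ((2 * π * σ ^ 2) ^ (-c / 2) * exp (-(c / (2 * σ ^ 2)) * t ^ 2))) μ]
  exact integral_eq_zero_of_odd fun t => by simp [hg t]

lemma integral_even_quartic_mul_normalPdf_rpow (hσ : σ ≠ 0) (hc : 0 < c) (a b d : ℝ) :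
    ∫ x, (a + b * (x - μ) ^ 2 + d * (x - μ) ^ 4) * normalPdf μ σ x ^ c =
      (a + b * σ ^ 2 / c + 3 * d * σ ^ 4 / c ^ 2) * ∫ x, normalPdf μ σ x ^ c := by
  have hint := integrable_sub_pow_mul_normalPdf_rpow (μ := μ) hσ hc
  have hint0 := hint 0
  have hm2 := integral_sub_pow_add_two_mul_normalPdf_rpow (μ := μ) hσ hc 0
  have hm4 := integral_sub_pow_add_two_mul_normalPdf_rpow (μ := μ) hσ hc 2
  simp only [pow_zero, one_mul] at hint0 hm2
  calc ∫ x, (a + b * (x - μ) ^ 2 + d * (x - μ) ^ 4) * normalPdf μ σ x ^ c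
      = ∫ x, a * normalPdf μ σ x ^ c + b * ((x - μ) ^ (0 + 2) * normalPdf μ σ x ^ c) +
          d * ((x - μ) ^ (2 + 2) * normalPdf μ σ x ^ c) := by
        congr 1 with x
        ring
    _ = a * (∫ x, normalPdf μ σ x ^ c) + b * (∫ x, (x - μ) ^ (0 + 2) * normalPdf μ σ x ^ c) +
          d * ∫ x, (x - μ) ^ (2 + 2) * normalPdf μ σ x ^ c := by
        rw [integral_add, integral_add, integral_const_mul, integral_const_mul, integral_const_mul]
        exacts [hint0.const_mul a, (hint 2).const_mul b, (hint0.const_mul a).add ((hint 2).const_mul b),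
          (hint 4).const_mul d]
    _ = _ := by
        rw [hm4, hm2]
        push_cast
        field_simp
        ring

lemma sq_integral_normalPdf_rpow (hσ : σ ≠ 0) (hc : 0 < c) :
    (∫ x, normalPdf μ σ x ^ c) ^ 2 = ((2 * π * σ ^ 2) ^ (c - 1) * c)⁻¹ := by
  have hpos : (0 : ℝ) < 2 * π * σ ^ 2 := by positivity
  rw [integral_normalPdf_rpow hσ hc, div_pow, sq_sqrt hc.le, ← rpow_natCast, ← rpow_mul hpos.le,
    show (1 - c) / 2 * ((2 : ℕ) : ℝ) = -(c - 1) by push_cast; ring, rpow_neg hpos.le, mul_inv,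
    div_eq_mul_inv]

lemma integral_normalScore_mul_normalPdf_rpow (hσ : σ ≠ 0) (hc : 0 < c) :
    (fun i => ∫ x, normalScore μ σ x i * normalPdf μ σ x ^ c) =
      ![0, (1 / c - 1) / σ * ∫ x, normalPdf μ σ x ^ c] := by
  funext i
  fin_cases i
  · simpa [normalScore] using integral_odd_comp_sub_mul_normalPdf_rpow (μ := μ) (σ := σ) (c := c)
      (g := fun t => t / σ ^ 2) fun t => by ring
  · convert integral_even_quartic_mul_normalPdf_rpow (μ := μ) hσ hc (-(σ ^ 2 / σ ^ 3)) (1 / σ ^ 3) 0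
      using 1
    · congr 1 with x
      simp only [Fin.mk_one, normalScore, Matrix.cons_val_one, Matrix.cons_val_zero]
      ring
    · simp only [Fin.mk_one, Matrix.cons_val_one, Matrix.cons_val_zero]
      field_simp
      ring

lemma integral_normalScore_mul_normalScore_mul_normalPdf_rpow (hσ : σ ≠ 0) (hc : 0 < c) :
    Matrix.of (fun i j => ∫ x, normalScore μ σ x i * normalScore μ σ x j * normalPdf μ σ x ^ c) =
      ((∫ x, normalPdf μ σ x ^ c) / σ ^ 2) • Matrix.diagonal ![1 / c, 3 / c ^ 2 - 2 / c + 1] := by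
  have hodd : ∫ x, (x - μ) / σ ^ 2 * (((x - μ) ^ 2 - σ ^ 2) / σ ^ 3) * normalPdf μ σ x ^ c = 0 :=
    integral_odd_comp_sub_mul_normalPdf_rpow (g := fun t => t / σ ^ 2 * ((t ^ 2 - σ ^ 2) / σ ^ 3))
      fun t => by ring
  ext i j
  fin_cases i <;> fin_cases j
  · simp only [Fin.zero_eta, Matrix.of_apply, normalScore, Matrix.smul_apply,
      Matrix.cons_val_zero, Matrix.diagonal_apply_eq, smul_eq_mul]
    convert integral_even_quartic_mul_normalPdf_rpow (μ := μ) hσ hc 0 (1 / σ ^ 4) 0 using 1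
    · congr 1 with x
      ring
    · field_simp
      ring
  · simpa [normalScore] using hodd
  · simpa [normalScore, mul_comm] using hodd
  · simp only [Fin.mk_one, Matrix.of_apply, normalScore, Matrix.smul_apply,
      Matrix.cons_val_one, Matrix.cons_val_zero, Matrix.diagonal_apply_eq, smul_eq_mul]
    convert integral_even_quartic_mul_normalPdf_rpow (μ := μ) hσ hc
      (σ ^ 4 / σ ^ 6) (-2 * σ ^ 2 / σ ^ 6) (1 / σ ^ 6) using 1
    · congr 1 with x
      ring
    · field_simp
      ring

end NormalMoments

lemma rpow_neg_three_div_two {x : ℝ} (hx : 0 ≤ x) : x ^ (-(3 : ℝ) / 2) = (x * √x)⁻¹ := by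
  rw [sqrt_eq_rpow, ← rpow_one_add' hx (by norm_num), ← rpow_neg hx]
  norm_num

/-- Let `μ ∈ ℝ`, `σ > 0`, `β ≥ 0`, `u` the normal score vector, and
`ξ = ∫ u φ_{μ,σ}^(1+β) dx`. Then the 2×2 matrix
`K_β = ∫ u uᵀ φ_{μ,σ}^(1+2β) dx − ξ ξᵀ` equals
`(σ^(2+2β) (2π)^β)⁻¹ [ (1+2β)^(−3/2)·diag(1, (4β²+2)/(1+2β)) − diag(0, β²/(1+β)³) ]`. -/
theorem normal_K_beta (μ σ β : ℝ) (hσ : 0 < σ) (hβ : 0 ≤ β)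
    (ξ : Fin 2 → ℝ)
    (hξ : ξ = fun i => ∫ x : ℝ, normalScore μ σ x i * normalPdf μ σ x ^ (1 + β)) :
    (Matrix.of fun i j : Fin 2 =>
        (∫ x : ℝ, normalScore μ σ x i * normalScore μ σ x j * normalPdf μ σ x ^ (1 + 2 * β)) -
          ξ i * ξ j) =
      (σ ^ (2 + 2 * β) * (2 * Real.pi) ^ β)⁻¹ •
        ((1 + 2 * β) ^ (-(3 : ℝ) / 2) •
            Matrix.diagonal ![1, (4 * β ^ 2 + 2) / (1 + 2 * β)] -
          Matrix.diagonal ![0, β ^ 2 / (1 + β) ^ 3]) := by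
  have hc₁ : 0 < 1 + β := by linarith
  have hc₂ : 0 < 1 + 2 * β := by linarith
  set P := (2 * π * σ ^ 2) ^ β with hP_def
  have hm₁ : (∫ x, normalPdf μ σ x ^ (1 + β)) ^ 2 = (P * (1 + β))⁻¹ := by
    rw [sq_integral_normalPdf_rpow hσ.ne' hc₁, add_sub_cancel_left]
  have hm₂ : ∫ x, normalPdf μ σ x ^ (1 + 2 * β) = (P * √(1 + 2 * β))⁻¹ := by
    rw [integral_normalPdf_rpow hσ.ne' hc₂, show (1 - (1 + 2 * β)) / 2 = -β by ring,
      rpow_neg (by positivity), mul_inv, div_eq_mul_inv]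
  have hscale : σ ^ (2 + 2 * β) * (2 * π) ^ β = σ ^ 2 * P := by
    rw [hP_def, mul_rpow (x := 2 * π) (by positivity) (by positivity), rpow_add hσ, rpow_mul hσ.le,
      rpow_two]
    ring
  change Matrix.of (fun i j => ∫ x, normalScore μ σ x i * normalScore μ σ x j *
      normalPdf μ σ x ^ (1 + 2 * β)) - Matrix.vecMulVec ξ ξ = _
  rw [integral_normalScore_mul_normalScore_mul_normalPdf_rpow hσ.ne' hc₂, hξ,
    integral_normalScore_mul_normalPdf_rpow hσ.ne' hc₁, rpow_neg_three_div_two hc₂.le, hscale, hm₂]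
  ext i j
  fin_cases i <;> fin_cases j <;>
    simp only [Fin.zero_eta, Fin.mk_one, Fin.isValue, Matrix.sub_apply, Matrix.smul_apply,
      Matrix.vecMulVec_apply, Matrix.diagonal_apply_eq, Matrix.diagonal_apply_ne _ zero_ne_one,
      Matrix.diagonal_apply_ne _ one_ne_zero, Matrix.cons_val_zero, Matrix.cons_val_one,
      Matrix.cons_val_fin_one, smul_eq_mul, ← pow_two, mul_pow, hm₁] <;>
    field_simp <;>
    ring
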